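/- arXiv:1608.02412 — 2 statements merged into one kernel-verified Lean document; each statement's English description precedes it below -/
import Mathlib

section
/- Let l < r be real numbers and let f : ℝ → ℝ be continuously differentiable on [l, r] with f(l) = 0 and f(r) = 0. Then for every s ∈ [l, r] one has f(s)² ≤ 2 · ‖f‖_{L²(l,r)} · ‖f′‖_{L²(l,r)}; in particular the supremum of |f| over [l, r] is at most √2 · ‖f‖_{L²(l,r)}^{1/2} · ‖f′‖_{L²(l,r)}^{1/2} (the one-dimensional Agmon inequality). -/
/-!
Since `f l = 0`, the fundamental theorem of calculus applied to `f ^ 2` gives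
`f s ^ 2 = ∫ x in l..s, 2 * f x * f' x ≤ 2 * ∫ x in l..r, |f x * f' x|`, and the
Cauchy–Schwarz inequality bounds the last integral by `‖f‖_{L²} ‖f'‖_{L²}`.
-/

open MeasureTheory Set

theorem integral_abs_mul_le_sqrt_mul_sqrt {α : Type*} [MeasurableSpace α] {μ : Measure α}
    {f g : α → ℝ} (hf : MemLp f 2 μ) (hg : MemLp g 2 μ) :
    ∫ a, |f a * g a| ∂μ ≤ √(∫ a, f a ^ 2 ∂μ) * √(∫ a, g a ^ 2 ∂μ) := by
  have h := integral_mul_norm_le_Lp_mul_Lq Real.HolderConjugate.two_two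
    (by simpa using hf) (by simpa using hg)
  simpa only [Real.norm_eq_abs, ← abs_mul, Real.rpow_two, sq_abs, ← Real.sqrt_eq_rpow] using h

theorem ContinuousOn.memLp_restrict_of_isCompact {α E : Type*} [TopologicalSpace α] [T2Space α]
    [MeasurableSpace α] [OpensMeasurableSpace α] [NormedAddCommGroup E]
    {μ : Measure α} [IsFiniteMeasureOnCompacts μ] {K : Set α} {f : α → E}
    (hK : IsCompact K) (hf : ContinuousOn f K) (p : ENNReal) : MemLp f p (μ.restrict K) := by
  have : IsFiniteMeasure (μ.restrict K) := isFiniteMeasure_restrict.2 hK.measure_lt_top.ne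
  obtain ⟨C, hC⟩ := hK.exists_bound_of_continuousOn hf
  exact .of_bound (hf.aestronglyMeasurable_of_isCompact hK hK.measurableSet) C
    (ae_restrict_of_forall_mem hK.measurableSet hC)

theorem intervalIntegral.integral_abs_mul_le_sqrt_mul_sqrt {a b : ℝ} (hab : a ≤ b) {f g : ℝ → ℝ}
    (hf : ContinuousOn f (Icc a b)) (hg : ContinuousOn g (Icc a b)) :
    ∫ x in a..b, |f x * g x| ≤ √(∫ x in a..b, f x ^ 2) * √(∫ x in a..b, g x ^ 2) := by
  have hmono : volume.restrict (Ioc a b) ≤ volume.restrict (Icc a b) :=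
    Measure.restrict_mono Ioc_subset_Icc_self le_rfl
  simp only [intervalIntegral.integral_of_le hab]
  exact _root_.integral_abs_mul_le_sqrt_mul_sqrt
    ((hf.memLp_restrict_of_isCompact isCompact_Icc 2).mono_measure hmono)
    ((hg.memLp_restrict_of_isCompact isCompact_Icc 2).mono_measure hmono)

theorem sq_le_two_mul_integral_abs_mul_deriv {l r s : ℝ} {f f' : ℝ → ℝ}
    (hderiv : ∀ x ∈ Icc l r, HasDerivAt f (f' x) x) (hcont : ContinuousOn f' (Icc l r))
    (hfl : f l = 0) (hs : s ∈ Icc l r) :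
    f s ^ 2 ≤ 2 * ∫ x in l..r, |f x * f' x| := by
  obtain ⟨hls, hsr⟩ := hs
  have hsub : Icc l s ⊆ Icc l r := Icc_subset_Icc_right hsr
  have hprod : ContinuousOn (fun x => f x * f' x) (Icc l r) :=
    (HasDerivAt.continuousOn hderiv).mul hcont
  have hsq : ∀ x ∈ Icc l r, HasDerivAt (f · ^ 2) (2 * (f x * f' x)) x := fun x hx =>
    ((hderiv x hx).fun_pow 2).congr_deriv (by norm_num; ring)
  have hftc : ∫ x in l..s, 2 * (f x * f' x) = f s ^ 2 - f l ^ 2 :=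
    intervalIntegral.integral_eq_sub_of_hasDerivAt
      (fun x hx => hsq x (hsub (by rwa [uIcc_of_le hls] at hx)))
      ((continuousOn_const.mul (hprod.mono hsub)).intervalIntegrable_of_Icc hls)
  calc f s ^ 2 = ∫ x in l..s, 2 * (f x * f' x) := by rw [hftc, hfl]; ring
    _ ≤ ∫ x in l..s, |2 * (f x * f' x)| :=
      (le_abs_self _).trans (intervalIntegral.abs_integral_le_integral_abs hls)
    _ = 2 * ∫ x in l..s, |f x * f' x| := by
      simp only [abs_mul, abs_two, intervalIntegral.integral_const_mul]
    _ ≤ 2 * ∫ x in l..r, |f x * f' x| := by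
      gcongr
      exact intervalIntegral.integral_mono_interval le_rfl hls hsr
        (ae_of_all _ fun x => abs_nonneg _) (hprod.abs.intervalIntegrable_of_Icc (hls.trans hsr))

theorem sSup_image_abs_le_sqrt {α : Type*} {S : Set α} {g : α → ℝ} {c : ℝ}
    (h : ∀ s ∈ S, g s ^ 2 ≤ c) : sSup ((fun s => |g s|) '' S) ≤ √c :=
  Real.sSup_le (by rintro _ ⟨s, hs, rfl⟩; exact Real.abs_le_sqrt (h s hs)) (Real.sqrt_nonneg c)

theorem agmon_one_dim_general (l r : ℝ) (hlr : l < r) (f f' : ℝ → ℝ)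
    (hderiv : ∀ x ∈ Set.Icc l r, HasDerivAt f (f' x) x)
    (hcont : ContinuousOn f' (Set.Icc l r))
    (hfl : f l = 0) :
    (∀ s ∈ Set.Icc l r,
      (f s) ^ 2 ≤ 2 * Real.sqrt (∫ x in l..r, (f x) ^ 2)
          * Real.sqrt (∫ x in l..r, (f' x) ^ 2)) ∧
    sSup ((fun s => |f s|) '' Set.Icc l r)
      ≤ Real.sqrt 2 * Real.sqrt (Real.sqrt (∫ x in l..r, (f x) ^ 2))
          * Real.sqrt (Real.sqrt (∫ x in l..r, (f' x) ^ 2)) := by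
  have pointwise : ∀ s ∈ Icc l r, f s ^ 2 ≤
      2 * √(∫ x in l..r, f x ^ 2) * √(∫ x in l..r, f' x ^ 2) := fun s hs =>
    calc f s ^ 2 ≤ 2 * ∫ x in l..r, |f x * f' x| :=
          sq_le_two_mul_integral_abs_mul_deriv hderiv hcont hfl hs
      _ ≤ _ := by
          rw [mul_assoc]
          gcongr
          exact intervalIntegral.integral_abs_mul_le_sqrt_mul_sqrt hlr.le
            (HasDerivAt.continuousOn hderiv) hcont
  refine ⟨pointwise, (sSup_image_abs_le_sqrt pointwise).trans_eq ?_⟩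
  rw [Real.sqrt_mul (by positivity), Real.sqrt_mul zero_le_two]

/-- One-dimensional Agmon inequality: if `f` is continuously differentiable on `[l, r]`
with `f l = 0` and `f r = 0`, then `f s ^ 2 ≤ 2 ‖f‖_{L²} ‖f'‖_{L²}` for every
`s ∈ [l, r]`, and consequently the supremum of `|f|` over `[l, r]` is at most
`√2 ‖f‖_{L²}^{1/2} ‖f'‖_{L²}^{1/2}`. -/
theorem agmon_one_dim (l r : ℝ) (hlr : l < r) (f f' : ℝ → ℝ)
    (hderiv : ∀ x ∈ Set.Icc l r, HasDerivAt f (f' x) x)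
    (hcont : ContinuousOn f' (Set.Icc l r))
    (hfl : f l = 0) (hfr : f r = 0) :
    (∀ s ∈ Set.Icc l r,
      (f s) ^ 2 ≤ 2 * Real.sqrt (∫ x in l..r, (f x) ^ 2)
          * Real.sqrt (∫ x in l..r, (f' x) ^ 2)) ∧
    sSup ((fun s => |f s|) '' Set.Icc l r)
      ≤ Real.sqrt 2 * Real.sqrt (Real.sqrt (∫ x in l..r, (f x) ^ 2))
          * Real.sqrt (Real.sqrt (∫ x in l..r, (f' x) ^ 2)) :=
  agmon_one_dim_general l r hlr f f' hderiv hcont hfl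
end

section
/- Let l < r be real numbers, let a : ℝ → ℝ be integrable on [l, r], and let z, w : ℝ → ℝ be continuously differentiable on [l, r] with z(l) = z(r) = 0 and w(l) = w(r) = 0. Then |∫_l^r a(x) z(x) w(x) dx| ≤ 2 · ‖a‖_{L¹(l,r)} · ‖z‖_{L²(l,r)}^{1/2} · ‖z′‖_{L²(l,r)}^{1/2} · ‖w‖_{L²(l,r)}^{1/2} · ‖w′‖_{L²(l,r)}^{1/2}. -/
open MeasureTheory Set

/-! Since `z(l) = 0`, `z(x)² = ∫ₗˣ 2 z z'`, and Cauchy–Schwarz gives Agmon's inequality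
`‖z‖_∞² ≤ 2 ‖z‖_{L²} ‖z'‖_{L²}`; likewise for `w`. The estimate then follows from
`|∫ a z w| ≤ ‖a‖_{L¹} ‖z‖_∞ ‖w‖_∞`. -/

theorem integral_abs_mul_abs_le_sqrt_mul_sqrt {α : Type*} [MeasurableSpace α] {μ : Measure α}
    {f g : α → ℝ} (hf : MemLp f 2 μ) (hg : MemLp g 2 μ) :
    ∫ x, |f x| * |g x| ∂μ ≤ √(∫ x, f x ^ 2 ∂μ) * √(∫ x, g x ^ 2 ∂μ) := by
  have h2 : ENNReal.ofReal 2 = 2 := by norm_num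
  have := integral_mul_norm_le_Lp_mul_Lq Real.HolderConjugate.two_two (h2 ▸ hf) (h2 ▸ hg)
  simpa only [Real.norm_eq_abs, Real.rpow_two, sq_abs, ← Real.sqrt_eq_rpow] using this

theorem ContinuousOn.memLp_two_restrict_Ioc {f : ℝ → ℝ} {l r : ℝ}
    (hf : ContinuousOn f (Icc l r)) : MemLp f 2 (volume.restrict (Ioc l r)) :=
  (memLp_two_iff_integrable_sq
    ((hf.aestronglyMeasurable measurableSet_Icc).mono_set Ioc_subset_Icc_self)).2
    ((hf.pow 2).integrableOn_Icc.mono_set Ioc_subset_Icc_self)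

namespace intervalIntegral

variable {l r : ℝ}

theorem integral_abs_mul_abs_le_sqrt_mul_sqrt (hlr : l ≤ r) {f g : ℝ → ℝ}
    (hf : ContinuousOn f (Icc l r)) (hg : ContinuousOn g (Icc l r)) :
    ∫ x in l..r, |f x| * |g x| ≤ √(∫ x in l..r, f x ^ 2) * √(∫ x in l..r, g x ^ 2) := by
  simp only [integral_of_le hlr]
  exact _root_.integral_abs_mul_abs_le_sqrt_mul_sqrt hf.memLp_two_restrict_Ioc
    hg.memLp_two_restrict_Ioc

theorem abs_integral_mul_le_integral_abs_mul (hlr : l ≤ r) {a g : ℝ → ℝ} {M : ℝ}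
    (ha : IntervalIntegrable a volume l r) (hg : ContinuousOn g (Icc l r))
    (hgM : ∀ x ∈ Icc l r, |g x| ≤ M) :
    |∫ x in l..r, a x * g x| ≤ (∫ x in l..r, |a x|) * M := by
  have hag : IntervalIntegrable (fun x ↦ a x * g x) volume l r :=
    ha.mul_continuousOn (uIcc_of_le hlr ▸ hg)
  calc |∫ x in l..r, a x * g x| ≤ ∫ x in l..r, |a x * g x| := abs_integral_le_integral_abs hlr
    _ ≤ ∫ x in l..r, |a x| * M := by
      refine integral_mono_on hlr hag.abs (ha.abs.mul_const M) fun x hx ↦ ?_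
      rw [abs_mul]
      exact mul_le_mul_of_nonneg_left (hgM x hx) (abs_nonneg _)
    _ = (∫ x in l..r, |a x|) * M := integral_mul_const M _

end intervalIntegral

section Agmon

variable {l r : ℝ} {z z' : ℝ → ℝ}

theorem sq_le_two_mul_sqrt_integral_sq_mul_sqrt_integral_sq
    (hz : ∀ x ∈ Icc l r, HasDerivAt z (z' x) x) (hz' : ContinuousOn z' (Icc l r))
    (hzl : z l = 0) {x : ℝ} (hx : x ∈ Icc l r) :
    z x ^ 2 ≤ 2 * (√(∫ t in l..r, z t ^ 2) * √(∫ t in l..r, z' t ^ 2)) := by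
  have hlr : l ≤ r := hx.1.trans hx.2
  have hzc : ContinuousOn z (Icc l r) := fun t ht ↦ (hz t ht).continuousAt.continuousWithinAt
  have hsub : uIcc l x ⊆ Icc l r := uIcc_of_le hx.1 ▸ Icc_subset_Icc_right hx.2
  have hzz' : ContinuousOn (fun t ↦ 2 * z t * z' t) (Icc l r) :=
    (continuousOn_const.mul hzc).mul hz'
  have hftc : z x ^ 2 = ∫ t in l..x, 2 * z t * z' t := by
    rw [intervalIntegral.integral_eq_sub_of_hasDerivAt
      (f := fun t ↦ z t ^ 2) (fun t ht ↦ by simpa [mul_comm] using (hz t (hsub ht)).fun_pow 2)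
      ((hzz'.mono hsub).intervalIntegrable), hzl]
    ring
  calc z x ^ 2 ≤ ∫ t in l..x, |2 * z t * z' t| := by
        rw [hftc]
        exact intervalIntegral.integral_mono_on hx.1 (hzz'.mono hsub).intervalIntegrable
          (hzz'.abs.mono hsub).intervalIntegrable fun t _ ↦ le_abs_self _
    _ ≤ ∫ t in l..r, |2 * z t * z' t| :=
        intervalIntegral.integral_mono_interval le_rfl hx.1 hx.2
          (Filter.Eventually.of_forall fun t ↦ abs_nonneg _)
          (uIcc_of_le hlr ▸ hzz'.abs).intervalIntegrable
    _ = 2 * ∫ t in l..r, |z t| * |z' t| := by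
        rw [← intervalIntegral.integral_const_mul]
        simp only [abs_mul, abs_two, mul_assoc]
    _ ≤ 2 * (√(∫ t in l..r, z t ^ 2) * √(∫ t in l..r, z' t ^ 2)) := by
        gcongr
        exact intervalIntegral.integral_abs_mul_abs_le_sqrt_mul_sqrt hlr hzc hz'

theorem abs_le_sqrt_two_mul_sqrt_sqrt_integral_sq_mul_sqrt_sqrt_integral_sq
    (hz : ∀ x ∈ Icc l r, HasDerivAt z (z' x) x) (hz' : ContinuousOn z' (Icc l r))
    (hzl : z l = 0) {x : ℝ} (hx : x ∈ Icc l r) :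
    |z x| ≤ √2 * √√(∫ t in l..r, z t ^ 2) * √√(∫ t in l..r, z' t ^ 2) := by
  rw [← Real.sqrt_sq_eq_abs, mul_assoc, ← Real.sqrt_mul (Real.sqrt_nonneg _),
    ← Real.sqrt_mul zero_le_two]
  exact Real.sqrt_le_sqrt (sq_le_two_mul_sqrt_integral_sq_mul_sqrt_integral_sq hz hz' hzl hx)

end Agmon

theorem reaction_term_estimate_one_dim_general (l r : ℝ) (hlr : l < r)
    (a z z' w w' : ℝ → ℝ)
    (ha : IntervalIntegrable a MeasureTheory.volume l r)
    (hz : ∀ x ∈ Set.Icc l r, HasDerivAt z (z' x) x)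
    (hz' : ContinuousOn z' (Set.Icc l r))
    (hzl : z l = 0)
    (hw : ∀ x ∈ Set.Icc l r, HasDerivAt w (w' x) x)
    (hw' : ContinuousOn w' (Set.Icc l r))
    (hwl : w l = 0) :
    |∫ x in l..r, a x * z x * w x|
      ≤ 2 * (∫ x in l..r, |a x|)
          * Real.sqrt (Real.sqrt (∫ x in l..r, (z x) ^ 2))
          * Real.sqrt (Real.sqrt (∫ x in l..r, (z' x) ^ 2))
          * Real.sqrt (Real.sqrt (∫ x in l..r, (w x) ^ 2))
          * Real.sqrt (Real.sqrt (∫ x in l..r, (w' x) ^ 2)) := by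
  have hzc : ContinuousOn z (Icc l r) := fun t ht ↦ (hz t ht).continuousAt.continuousWithinAt
  have hwc : ContinuousOn w (Icc l r) := fun t ht ↦ (hw t ht).continuousAt.continuousWithinAt
  have hzw_bound : ∀ x ∈ Icc l r, |z x * w x| ≤
      (√2 * √√(∫ t in l..r, z t ^ 2) * √√(∫ t in l..r, z' t ^ 2)) *
      (√2 * √√(∫ t in l..r, w t ^ 2) * √√(∫ t in l..r, w' t ^ 2)) := fun x hx ↦ by
    rw [abs_mul]
    exact mul_le_mul
      (abs_le_sqrt_two_mul_sqrt_sqrt_integral_sq_mul_sqrt_sqrt_integral_sq hz hz' hzl hx)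
      (abs_le_sqrt_two_mul_sqrt_sqrt_integral_sq_mul_sqrt_sqrt_integral_sq hw hw' hwl hx)
      (abs_nonneg _) (by positivity)
  simp only [mul_assoc (a _)]
  refine (intervalIntegral.abs_integral_mul_le_integral_abs_mul hlr.le ha (hzc.mul hwc)
    hzw_bound).trans_eq ?_
  have h2 : √2 * √2 = (2 : ℝ) := Real.mul_self_sqrt zero_le_two
  linear_combination (∫ x in l..r, |a x|) * √√(∫ t in l..r, z t ^ 2) *
    √√(∫ t in l..r, z' t ^ 2) * √√(∫ t in l..r, w t ^ 2) * √√(∫ t in l..r, w' t ^ 2) * h2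

/-- Estimate for the reaction term in dimension one: if `a` is integrable on `[l, r]` and
`z, w` are continuously differentiable on `[l, r]` vanishing at the endpoints, then
`|∫ a z w| ≤ 2 ‖a‖_{L¹} ‖z‖_{L²}^{1/2} ‖z'‖_{L²}^{1/2} ‖w‖_{L²}^{1/2} ‖w'‖_{L²}^{1/2}`. -/
theorem reaction_term_estimate_one_dim (l r : ℝ) (hlr : l < r)
    (a z z' w w' : ℝ → ℝ)
    (ha : IntervalIntegrable a MeasureTheory.volume l r)
    (hz : ∀ x ∈ Set.Icc l r, HasDerivAt z (z' x) x)
    (hz' : ContinuousOn z' (Set.Icc l r))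
    (hzl : z l = 0) (hzr : z r = 0)
    (hw : ∀ x ∈ Set.Icc l r, HasDerivAt w (w' x) x)
    (hw' : ContinuousOn w' (Set.Icc l r))
    (hwl : w l = 0) (hwr : w r = 0) :
    |∫ x in l..r, a x * z x * w x|
      ≤ 2 * (∫ x in l..r, |a x|)
          * Real.sqrt (Real.sqrt (∫ x in l..r, (z x) ^ 2))
          * Real.sqrt (Real.sqrt (∫ x in l..r, (z' x) ^ 2))
          * Real.sqrt (Real.sqrt (∫ x in l..r, (w x) ^ 2))
          * Real.sqrt (Real.sqrt (∫ x in l..r, (w' x) ^ 2)) :=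
  reaction_term_estimate_one_dim_general l r hlr a z z' w w' ha hz hz' hzl hw hw' hwl
end
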